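/- arXiv:1411.4173 — 2 statements merged into one kernel-verified Lean document; each statement's English description precedes it below -/
import Mathlib

section
/- (Finite-horizon expressions.) Let m ≤ n in ℕ ∪ {0}, let f be an n-measurable extended real variable (writing f(x_{1:n}) for its constant value on ⟦x_{1:n}⟧), and let x_{1:m} be any situation of length m. Then E(f | x_{1:m}) = sup{M(x_{1:m}) : M a submartingale such that M(x_{1:m} x_{m+1:n}) ≤ f(x_{1:m} x_{m+1:n}) for all x_{m+1:n} ∈ 𝒳_{m+1} × ⋯ × 𝒳_n}, and dually Ē(f | x_{1:m}) = inf{M(x_{1:m}) : M a supermartingale such that M(x_{1:m} x_{m+1:n}) ≥ f(x_{1:m} x_{m+1:n}) for all x_{m+1:n} ∈ 𝒳_{m+1} × ⋯ × 𝒳_n}. -/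
open Filter Topology

namespace IP

/-- A situation of length `n`: a tuple of the first `n` states. -/
abbrev Sit (𝒳 : ℕ → Type) (n : ℕ) := (i : Fin n) → 𝒳 i

/-- A path: an infinite sequence of states. -/
abbrev Path (𝒳 : ℕ → Type) := (i : ℕ) → 𝒳 i

/-- The initial segment `ω^n` of a path. -/
def res {𝒳 : ℕ → Type} (ω : Path 𝒳) (n : ℕ) : Sit 𝒳 n := fun i => ω i

/-- The initial (empty) situation `□`. -/
def emptySit {𝒳 : ℕ → Type} : Sit 𝒳 0 := fun i => i.elim0

/-- Append a next state to a situation. -/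
def snoc {𝒳 : ℕ → Type} {n : ℕ} (s : Sit 𝒳 n) (x : 𝒳 n) : Sit 𝒳 (n + 1) := fun i =>
  if h : (i : ℕ) < n then s ⟨i, h⟩
  else cast (congrArg 𝒳 (Nat.le_antisymm (Nat.le_of_not_lt h) (Nat.lt_succ_iff.mp i.isLt))) x

/-- Truncate a situation of length `n` to its first `k` states. -/
def trunc {𝒳 : ℕ → Type} {n : ℕ} (s : Sit 𝒳 n) (k : ℕ) (h : k ≤ n) : Sit 𝒳 k :=
  fun i => s ⟨i, lt_of_lt_of_le i.isLt h⟩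

/-- A (coherent) lower expectation on a nonempty finite set. -/
def IsLE {Y : Type} [Fintype Y] [Nonempty Y] (E : (Y → ℝ) → ℝ) : Prop :=
  (∀ f : Y → ℝ, (⨅ y, f y) ≤ E f) ∧
  (∀ f g : Y → ℝ, E f + E g ≤ E (fun y => f y + g y)) ∧
  (∀ (f : Y → ℝ) (c : ℝ), 0 ≤ c → E (fun y => c * f y) = c * E f)

/-- Submartingale w.r.t. the local models `Q` of an imprecise probability tree. -/
def IsSubmartingale {𝒳 : ℕ → Type} (Q : ∀ n, Sit 𝒳 n → (𝒳 n → ℝ) → ℝ)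
    (F : ∀ n, Sit 𝒳 n → ℝ) : Prop :=
  ∀ (n : ℕ) (s : Sit 𝒳 n), 0 ≤ Q n s (fun x => F (n + 1) (snoc s x) - F n s)

/-- Supermartingale: `-F` is a submartingale. -/
def IsSupermartingale {𝒳 : ℕ → Type} (Q : ∀ n, Sit 𝒳 n → (𝒳 n → ℝ) → ℝ)
    (F : ∀ n, Sit 𝒳 n → ℝ) : Prop :=
  IsSubmartingale Q (fun n s => -F n s)

/-- A test supermartingale: nonnegative, starting at 1. -/
def IsTestSupermartingale {𝒳 : ℕ → Type} (Q : ∀ n, Sit 𝒳 n → (𝒳 n → ℝ) → ℝ)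
    (F : ∀ n, Sit 𝒳 n → ℝ) : Prop :=
  IsSupermartingale Q F ∧ (∀ n s, 0 ≤ F n s) ∧ F 0 emptySit = 1

/-- An event is strictly null if some test supermartingale converges to `+∞` on it. -/
def StrictlyNull {𝒳 : ℕ → Type} (Q : ∀ n, Sit 𝒳 n → (𝒳 n → ℝ) → ℝ)
    (A : Set (Path 𝒳)) : Prop :=
  ∃ F : ∀ n, Sit 𝒳 n → ℝ, IsTestSupermartingale Q F ∧
    ∀ ω ∈ A, Tendsto (fun n => F n (res ω n)) atTop atTop

/-- `limsup_n F(ω^n)` as an extended real. -/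
noncomputable def pathLimsup {𝒳 : ℕ → Type} (F : ∀ n, Sit 𝒳 n → ℝ) (ω : Path 𝒳) : EReal :=
  Filter.limsup (fun n => (F n (res ω n) : EReal)) atTop

/-- `liminf_n F(ω^n)` as an extended real. -/
noncomputable def pathLiminf {𝒳 : ℕ → Type} (F : ∀ n, Sit 𝒳 n → ℝ) (ω : Path 𝒳) : EReal :=
  Filter.liminf (fun n => (F n (res ω n) : EReal)) atTop

/-- A real process bounded above. -/
def BddAbv {𝒳 : ℕ → Type} (F : ∀ n, Sit 𝒳 n → ℝ) : Prop := ∃ B : ℝ, ∀ n s, F n s ≤ B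

/-- A real process bounded below. -/
def BddBlw {𝒳 : ℕ → Type} (F : ∀ n, Sit 𝒳 n → ℝ) : Prop := ∃ B : ℝ, ∀ n s, B ≤ F n s

/-- Conditional global lower expectation `E(f|s)` of an extended real variable. -/
noncomputable def lexp {𝒳 : ℕ → Type} (Q : ∀ n, Sit 𝒳 n → (𝒳 n → ℝ) → ℝ) {n : ℕ}
    (s : Sit 𝒳 n) (f : Path 𝒳 → EReal) : EReal :=
  sSup ((fun F : ∀ k, Sit 𝒳 k → ℝ => (F n s : EReal)) ''
    {F : ∀ k, Sit 𝒳 k → ℝ | IsSubmartingale Q F ∧ BddAbv F ∧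
      ∀ ω : Path 𝒳, res ω n = s → pathLimsup F ω ≤ f ω})

/-- Conditional global upper expectation `Ē(f|s)`. -/
noncomputable def uexp {𝒳 : ℕ → Type} (Q : ∀ n, Sit 𝒳 n → (𝒳 n → ℝ) → ℝ) {n : ℕ}
    (s : Sit 𝒳 n) (f : Path 𝒳 → EReal) : EReal :=
  - lexp Q s (fun ω => - f ω)

/-- The local models of a (time-homogeneous) imprecise Markov chain with initial model `E1`
and transition models `QT`. -/
def markovQ {X : Type} (E1 : (X → ℝ) → ℝ) (QT : X → (X → ℝ) → ℝ) :
    ∀ n, Sit (fun _ => X) n → (X → ℝ) → ℝ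
  | 0, _ => E1
  | n + 1, s => QT (s ⟨n, Nat.lt_succ_self n⟩)

/-- Prefix a path with a situation (fixed state space). -/
def prependX {X : Type} {n : ℕ} (s : Sit (fun _ => X) n) (ω : ℕ → X) : ℕ → X :=
  fun i => if h : i < n then s ⟨i, h⟩ else ω (i - n)

/-- Extension of a lower transition operator to extended real maps. -/
noncomputable def Text {X : Type} (T : (X → ℝ) → X → ℝ) (g : X → EReal) : X → EReal :=
  fun x => sSup ((fun h : X → ℝ => (T h x : EReal)) '' {h : X → ℝ | ∀ y, (h y : EReal) ≤ g y})

/-- The variation (semi)norm `max h - min h`. -/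
noncomputable def varnorm {X : Type} [Fintype X] [Nonempty X] (h : X → ℝ) : ℝ :=
  (⨆ x, h x) - ⨅ x, h x

/-- The (weak) coefficient of ergodicity of a lower transition operator. -/
noncomputable def coeff {X : Type} [Fintype X] [Nonempty X] (S : (X → ℝ) → X → ℝ) : ℝ :=
  sSup {v : ℝ | ∃ h : X → ℝ, (∀ x, 0 ≤ h x ∧ h x ≤ 1) ∧ v = varnorm (S h)}

/-- Extend a situation to a path, arbitrarily. -/
noncomputable def extend {𝒳 : ℕ → Type} [∀ k, Nonempty (𝒳 k)] {n : ℕ} (t : Sit 𝒳 n) :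
    Path 𝒳 :=
  fun i => if h : i < n then t ⟨i, h⟩ else Classical.arbitrary (𝒳 i)


/-! ### Auxiliary lemmas -/

lemma snoc_lt' {𝒳 : ℕ → Type} {n : ℕ} (s : Sit 𝒳 n) (x : 𝒳 n) (i : Fin (n+1))
    (h : (i : ℕ) < n) : snoc s x i = s ⟨i, h⟩ := dif_pos h

lemma snoc_last' {𝒳 : ℕ → Type} {n : ℕ} (s : Sit 𝒳 n) (x : 𝒳 n) (h : n < n + 1) :
    snoc s x ⟨n, h⟩ = x := by
  have hn : ¬ (n < n) := lt_irrefl n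
  simp only [snoc, dif_neg hn]
  exact eq_of_heq (cast_heq _ _)

lemma trunc_self' {𝒳 : ℕ → Type} {n : ℕ} (u : Sit 𝒳 n) (h : n ≤ n) : trunc u n h = u := rfl

lemma trunc_snoc' {𝒳 : ℕ → Type} {k n : ℕ} (u : Sit 𝒳 k) (x : 𝒳 k) (hnk : n ≤ k)
    (h : n ≤ k + 1) : trunc (snoc u x) n h = trunc u n hnk := by
  funext i
  exact dif_pos (lt_of_lt_of_le i.isLt hnk)

lemma trunc_res' {𝒳 : ℕ → Type} (ω : Path 𝒳) {k n : ℕ} (h : n ≤ k) :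
    trunc (res ω k) n h = res ω n := rfl

lemma res_extend' {𝒳 : ℕ → Type} [∀ k, Nonempty (𝒳 k)] {n : ℕ} (t : Sit 𝒳 n) :
    res (extend t) n = t := by
  funext i
  show (if h : (i:ℕ) < n then t ⟨i, h⟩ else _) = t i
  rw [dif_pos i.isLt]

lemma IsLE.zero' {Y : Type} [Fintype Y] [Nonempty Y] {E : (Y → ℝ) → ℝ} (hE : IsLE E) :
    E (fun _ => (0:ℝ)) = 0 := by
  have h := hE.2.2 (fun _ => (1:ℝ)) 0 le_rfl
  simpa using h

lemma exists_snoc_ge {𝒳 : ℕ → Type} [∀ n, Fintype (𝒳 n)] [∀ n, Nonempty (𝒳 n)]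
    (Q : ∀ n, Sit 𝒳 n → (𝒳 n → ℝ) → ℝ) (hQ : ∀ n s, IsLE (Q n s))
    {F : ∀ k, Sit 𝒳 k → ℝ} (hF : IsSubmartingale Q F) (k : ℕ) (u : Sit 𝒳 k) :
    ∃ x : 𝒳 k, F k u ≤ F (k + 1) (snoc u x) := by
  obtain ⟨x0, hx0⟩ := Finite.exists_max (fun x : 𝒳 k => F (k+1) (snoc u x) - F k u)
  refine ⟨x0, ?_⟩
  set Δ : 𝒳 k → ℝ := fun x => F (k+1) (snoc u x) - F k u with hΔ
  have h1 : 0 ≤ Q k u Δ := hF k u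
  have h2 : Q k u Δ + Q k u (fun x => -Δ x) ≤ Q k u (fun x => Δ x + -Δ x) := (hQ k u).2.1 _ _
  have h0 : Q k u (fun x => Δ x + -Δ x) = 0 := by
    have heq : (fun x : 𝒳 k => Δ x + -Δ x) = fun _ : 𝒳 k => (0:ℝ) := by funext x; ring
    rw [heq, (hQ k u).zero']
  have h3 : (⨅ x, -Δ x) ≤ Q k u (fun x => -Δ x) := (hQ k u).1 _
  have h4 : -Δ x0 ≤ ⨅ x, -Δ x := le_ciInf fun x => neg_le_neg (hx0 x)
  have : 0 ≤ Δ x0 := by linarith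
  simpa [hΔ] using this

lemma sInf_neg_image (S : Set EReal) : sInf (Neg.neg '' S) = -sSup S := by
  apply le_antisymm
  · have h : sSup S ≤ -sInf (Neg.neg '' S) := by
      apply sSup_le
      intro a ha
      have h1 : sInf (Neg.neg '' S) ≤ -a := sInf_le ⟨a, ha, rfl⟩
      have h2 := EReal.neg_le_neg_iff.mpr h1
      rwa [neg_neg] at h2
    have h2 := EReal.neg_le_neg_iff.mpr h
    rwa [neg_neg] at h2
  · apply le_sInf
    rintro b ⟨a, ha, rfl⟩
    exact EReal.neg_le_neg_iff.mpr (le_sSup ha)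

/-- Greedy extension of a situation. -/
noncomputable def greedySeg {𝒳 : ℕ → Type} (step : ∀ k, Sit 𝒳 k → 𝒳 k) : ∀ k, Sit 𝒳 k
  | 0 => fun i => i.elim0
  | k + 1 => snoc (greedySeg step k) (step k (greedySeg step k))

noncomputable def greedyPath {𝒳 : ℕ → Type} (step : ∀ k, Sit 𝒳 k → 𝒳 k) : Path 𝒳 :=
  fun i => greedySeg step (i+1) ⟨i, Nat.lt_succ_self i⟩

lemma greedySeg_agree {𝒳 : ℕ → Type} (step : ∀ k, Sit 𝒳 k → 𝒳 k) :
    ∀ (k j : ℕ) (hjk : j ≤ k) (i : ℕ) (h : i < j),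
      greedySeg step k ⟨i, lt_of_lt_of_le h hjk⟩ = greedySeg step j ⟨i, h⟩ := by
  intro k
  induction k with
  | zero => intro j hjk i h; omega
  | succ k ih =>
    intro j hjk i h
    rcases Nat.lt_succ_iff_lt_or_eq.mp (Nat.lt_succ_of_le hjk) with hj | hj
    · have hjk' : j ≤ k := Nat.lt_succ_iff.mp hj
      have hik : i < k := lt_of_lt_of_le h hjk'
      have heq : greedySeg step (k+1) ⟨i, lt_of_lt_of_le h hjk⟩ = greedySeg step k ⟨i, hik⟩ := by
        show snoc _ _ _ = _
        exact dif_pos hik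
      rw [heq, ih j hjk' i h]
    · subst hj; rfl

lemma res_greedyPath {𝒳 : ℕ → Type} (step : ∀ k, Sit 𝒳 k → 𝒳 k) (k : ℕ) :
    res (greedyPath step) k = greedySeg step k := by
  funext i
  show greedySeg step ((i:ℕ)+1) ⟨i, Nat.lt_succ_self _⟩ = greedySeg step k i
  have h := greedySeg_agree step k ((i:ℕ)+1) i.isLt (i:ℕ) (Nat.lt_succ_self _)
  rw [← h]

/-- Freeze a process at time `n`. -/
noncomputable def freeze {𝒳 : ℕ → Type} (M : ∀ k, Sit 𝒳 k → ℝ) (n : ℕ) : ∀ k, Sit 𝒳 k → ℝ :=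
  fun k u => if h : k ≤ n then M k u else M n (trunc u n (le_of_not_ge h))

lemma freeze_submartingale {𝒳 : ℕ → Type} [∀ k, Fintype (𝒳 k)] [∀ k, Nonempty (𝒳 k)]
    (Q : ∀ k, Sit 𝒳 k → (𝒳 k → ℝ) → ℝ) (hQ : ∀ k s, IsLE (Q k s))
    {M : ∀ k, Sit 𝒳 k → ℝ} (hM : IsSubmartingale Q M) (n : ℕ) :
    IsSubmartingale Q (freeze M n) := by
  intro k u
  by_cases hk1 : k + 1 ≤ n
  · have hk : k ≤ n := Nat.le_of_succ_le hk1
    have heq : (fun x => freeze M n (k+1) (snoc u x) - freeze M n k u)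
        = fun x => M (k+1) (snoc u x) - M k u := by
      funext x
      simp only [freeze, dif_pos hk1, dif_pos hk]
    rw [heq]
    exact hM k u
  · by_cases hk : k ≤ n
    · have hkn : k = n := by omega
      subst hkn
      have heq : (fun x => freeze M k (k+1) (snoc u x) - freeze M k k u)
          = fun _ : 𝒳 k => (0:ℝ) := by
        funext x
        simp only [freeze, dif_neg hk1, dif_pos le_rfl]
        rw [trunc_snoc' u x le_rfl (le_of_not_ge hk1), trunc_self']
        ring
      rw [heq, (hQ k u).zero']
    · have hnk : n ≤ k := le_of_not_ge hk
      have heq : (fun x => freeze M n (k+1) (snoc u x) - freeze M n k u)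
          = fun _ : 𝒳 k => (0:ℝ) := by
        funext x
        have hk1' : ¬ (k + 1 ≤ n) := by omega
        simp only [freeze, dif_neg hk1', dif_neg hk]
        rw [trunc_snoc' u x hnk (le_of_not_ge hk1')]
        ring
      rw [heq, (hQ k u).zero']

lemma freeze_bddAbv {𝒳 : ℕ → Type} [∀ k, Fintype (𝒳 k)] [∀ k, Nonempty (𝒳 k)]
    (M : ∀ k, Sit 𝒳 k → ℝ) (n : ℕ) : BddAbv (freeze M n) := by
  have hb : ∀ j : ℕ, ∃ B : ℝ, ∀ v : Sit 𝒳 j, M j v ≤ B := fun j => by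
    obtain ⟨v0, hv0⟩ := Finite.exists_max (M j)
    exact ⟨M j v0, hv0⟩
  choose b hbspec using hb
  refine ⟨(Finset.range (n+1)).sup' (by simp) b, ?_⟩
  intro k u
  by_cases h : k ≤ n
  · rw [show freeze M n k u = M k u from dif_pos h]
    exact le_trans (hbspec k u) (Finset.le_sup' b (by simp; omega))
  · rw [show freeze M n k u = M n (trunc u n (le_of_not_ge h)) from dif_neg h]
    exact le_trans (hbspec n _) (Finset.le_sup' b (by simp))

lemma lexp_finite {𝒳 : ℕ → Type} [∀ n, Fintype (𝒳 n)] [∀ n, Nonempty (𝒳 n)]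
    (Q : ∀ n, Sit 𝒳 n → (𝒳 n → ℝ) → ℝ) (hQ : ∀ n s, IsLE (Q n s))
    (m n : ℕ) (hmn : m ≤ n) (f : Path 𝒳 → EReal)
    (hf : ∀ ω ω' : Path 𝒳, res ω n = res ω' n → f ω = f ω') (s : Sit 𝒳 m) :
    lexp Q s f = sSup ((fun F : ∀ k, Sit 𝒳 k → ℝ => (F m s : EReal)) ''
        {F : ∀ k, Sit 𝒳 k → ℝ | IsSubmartingale Q F ∧
          ∀ t : Sit 𝒳 n, trunc t m hmn = s → (F n t : EReal) ≤ f (extend t)}) := by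
  apply le_antisymm
  · -- every admissible process for `lexp` satisfies the finite-horizon constraint
    apply sSup_le_sSup
    apply Set.image_mono
    rintro F ⟨hsub, _hbdd, hlim⟩
    refine ⟨hsub, ?_⟩
    intro t ht
    -- greedy path through t along which F does not decrease after time n
    set step : ∀ k, Sit 𝒳 k → 𝒳 k := fun k u =>
      if h : k < n then t ⟨k, h⟩ else Classical.choose (exists_snoc_ge Q hQ hsub k u) with hstep
    set ω : Path 𝒳 := greedyPath step with hω
    have hseg : ∀ (k : ℕ) (hk : k ≤ n), greedySeg step k = trunc t k hk := by
      intro k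
      induction k with
      | zero => intro hk; funext i; exact i.elim0
      | succ k ih =>
        intro hk
        have hkn : k < n := hk
        have hkn' : k ≤ n := le_of_lt hkn
        show snoc (greedySeg step k) (step k (greedySeg step k)) = trunc t (k+1) hk
        rw [ih hkn']
        have hstepk : step k (trunc t k hkn') = t ⟨k, hkn⟩ := dif_pos hkn
        rw [hstepk]
        funext i
        obtain ⟨iv, hiv⟩ := i
        by_cases hi : iv < k
        · rw [snoc_lt' _ _ ⟨iv, hiv⟩ hi]
          rfl
        · have hivk : iv = k := by omega
          subst hivk
          rw [snoc_last']
          rfl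
    have hsegn : greedySeg step n = t := by rw [hseg n le_rfl]; rfl
    have hresn : res ω n = t := by rw [hω, res_greedyPath, hsegn]
    have hresm : res ω m = s := by
      rw [hω, res_greedyPath, hseg m hmn]
      exact ht
    have hmono : ∀ k, n ≤ k → F n t ≤ F k (greedySeg step k) := by
      intro k hk
      induction k, hk using Nat.le_induction with
      | base => rw [hsegn]
      | succ k hk ih =>
        have hstepk : step k (greedySeg step k)
            = Classical.choose (exists_snoc_ge Q hQ hsub k (greedySeg step k)) :=
          dif_neg (not_lt.mpr hk)
        have hspec := Classical.choose_spec (exists_snoc_ge Q hQ hsub k (greedySeg step k))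
        show F n t ≤ F (k+1) (snoc (greedySeg step k) (step k (greedySeg step k)))
        rw [hstepk]
        exact le_trans ih hspec
    have hev : ∀ᶠ k in atTop, (F n t : EReal) ≤ (F k (res ω k) : EReal) := by
      rw [eventually_atTop]
      exact ⟨n, fun k hk => by
        rw [hω, res_greedyPath]
        exact_mod_cast hmono k hk⟩
    have hle : (F n t : EReal) ≤ pathLimsup F ω := by
      calc (F n t : EReal) = limsup (fun _ : ℕ => (F n t : EReal)) atTop := (limsup_const _).symm
        _ ≤ limsup (fun k => (F k (res ω k) : EReal)) atTop := limsup_le_limsup hev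
    have hfeq : f ω = f (extend t) := hf ω (extend t) (by rw [hresn, res_extend'])
    exact le_trans hle (le_trans (hlim ω hresm) (le_of_eq hfeq))
  · -- conversely, freeze any finite-horizon admissible process at time n
    apply sSup_le
    rintro v ⟨F, ⟨hsub, hfin⟩, rfl⟩
    apply le_sSup
    refine ⟨freeze F n, ⟨freeze_submartingale Q hQ hsub n, freeze_bddAbv F n, ?_⟩, ?_⟩
    · intro ω hωm
      have hev : ∀ᶠ k in atTop, (freeze F n k (res ω k) : EReal) = ((F n (res ω n) : ℝ) : EReal) := by
        rw [eventually_atTop]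
        refine ⟨n, fun k hk => ?_⟩
        by_cases hk' : k ≤ n
        · have : k = n := le_antisymm hk' hk
          subst this
          rw [show freeze F k k (res ω k) = F k (res ω k) from dif_pos le_rfl]
        · rw [show freeze F n k (res ω k) = F n (trunc (res ω k) n (le_of_not_ge hk')) from
            dif_neg hk', trunc_res']
      have hlimsup : pathLimsup (freeze F n) ω = ((F n (res ω n) : ℝ) : EReal) := by
        rw [pathLimsup, limsup_congr hev, limsup_const]
      rw [hlimsup]
      have htr : trunc (res ω n) m hmn = s := by rw [trunc_res' ω hmn, hωm]
      have h1 := hfin (res ω n) htr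
      have hfeq : f (extend (res ω n)) = f ω :=
        hf (extend (res ω n)) ω (res_extend' (res ω n))
      rw [hfeq] at h1
      exact h1
    · show ((freeze F n m s : ℝ) : EReal) = (F m s : EReal)
      rw [show freeze F n m s = F m s from dif_pos hmn]

/-- Finite-horizon expressions for the global lower and upper expectations of `n`-measurable
extended real variables. -/
theorem finite_horizon {𝒳 : ℕ → Type} [∀ n, Fintype (𝒳 n)] [∀ n, Nonempty (𝒳 n)]
    (Q : ∀ n, Sit 𝒳 n → (𝒳 n → ℝ) → ℝ) (hQ : ∀ n s, IsLE (Q n s))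
    (m n : ℕ) (hmn : m ≤ n) (f : Path 𝒳 → EReal)
    (hf : ∀ ω ω' : Path 𝒳, res ω n = res ω' n → f ω = f ω') (s : Sit 𝒳 m) :
    (lexp Q s f = sSup ((fun F : ∀ k, Sit 𝒳 k → ℝ => (F m s : EReal)) ''
        {F : ∀ k, Sit 𝒳 k → ℝ | IsSubmartingale Q F ∧
          ∀ t : Sit 𝒳 n, trunc t m hmn = s → (F n t : EReal) ≤ f (extend t)}))
    ∧ (uexp Q s f = sInf ((fun F : ∀ k, Sit 𝒳 k → ℝ => (F m s : EReal)) ''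
        {F : ∀ k, Sit 𝒳 k → ℝ | IsSupermartingale Q F ∧
          ∀ t : Sit 𝒳 n, trunc t m hmn = s → f (extend t) ≤ (F n t : EReal)})) := by
  refine ⟨lexp_finite Q hQ m n hmn f hf s, ?_⟩
  have h1 := lexp_finite Q hQ m n hmn (fun ω => -f ω)
    (fun ω ω' h => by show -f ω = -f ω'; rw [hf ω ω' h]) s
  show - lexp Q s (fun ω => -f ω) = _
  rw [h1, ← sInf_neg_image]
  congr 1
  ext v
  constructor
  · rintro ⟨w, ⟨G, ⟨hGsub, hGfin⟩, rfl⟩, rfl⟩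
    refine ⟨fun k u => -G k u, ⟨?_, ?_⟩, ?_⟩
    · show IsSubmartingale Q (fun k u => - - G k u)
      simpa only [neg_neg] using hGsub
    · intro t ht
      have h2 := hGfin t ht
      have h3 : f (extend t) ≤ -((G n t : ℝ) : EReal) := EReal.le_neg_of_le_neg h2
      rw [← EReal.coe_neg] at h3
      exact h3
    · show (((-G m s : ℝ)) : EReal) = -((G m s : ℝ) : EReal)
      rw [EReal.coe_neg]
  · rintro ⟨F, ⟨hFsup, hFfin⟩, rfl⟩
    refine ⟨((-F m s : ℝ) : EReal), ⟨fun k u => -F k u, ⟨?_, ?_⟩, rfl⟩, ?_⟩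
    · exact hFsup
    · intro t ht
      have h2 := hFfin t ht
      have h3 : -((F n t : ℝ) : EReal) ≤ -(f (extend t)) := EReal.neg_le_neg_iff.mpr h2
      rw [← EReal.coe_neg] at h3
      exact h3
    · rw [EReal.coe_neg, neg_neg]


end IP
end

section
/- Let 𝒳 be a nonempty finite set and let T be a lower transition operator on 𝒳 that is Perron–Frobenius-like, with stationary lower expectation E_∞. Then, extending T and E_∞ to extended real maps as described, E_∞(g) = E_∞(Tg) for every extended real map g : 𝒳 → ℝ ∪ {−∞,+∞}. -/
open Filter Topology

namespace IP

section Aux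

variable {X : Type} [Fintype X] [Nonempty X]

lemma IsLE.const {E : (X → ℝ) → ℝ} (hE : IsLE E) (c : ℝ) : E (fun _ => c) = c := by
  obtain ⟨h1, h2, h3⟩ := hE
  have hE0 : E (fun _ => (0:ℝ)) = 0 := by
    have := h3 (fun _ => 0) 0 le_rfl
    simpa using this
  have hlow : ∀ c : ℝ, c ≤ E (fun _ => c) := by
    intro c
    have := h1 (fun _ => c)
    simpa [ciInf_const] using this
  have hadd := h2 (fun _ => c) (fun _ => -c)
  have : E (fun _ => c) + E (fun _ => -c) ≤ 0 := by
    simpa [hE0] using hadd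
  have hneg := hlow (-c)
  have hup : E (fun _ => c) ≤ c := by linarith
  exact le_antisymm hup (hlow c)

lemma IsLE.mono {E : (X → ℝ) → ℝ} (hE : IsLE E) {f g : X → ℝ} (h : ∀ y, f y ≤ g y) :
    E f ≤ E g := by
  obtain ⟨h1, h2, _⟩ := hE
  have hadd := h2 f (fun y => g y - f y)
  have hnn : (0:ℝ) ≤ E (fun y => g y - f y) := by
    refine le_trans ?_ (h1 _)
    exact le_ciInf fun y => sub_nonneg.2 (h y)
  have : E f + E (fun y => g y - f y) ≤ E g := by
    simpa using hadd
  linarith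

lemma IsLE.shift {E : (X → ℝ) → ℝ} (hE : IsLE E) (f : X → ℝ) (c : ℝ) :
    E (fun y => f y + c) = E f + c := by
  obtain ⟨h1, h2, h3⟩ := hE
  have hc := IsLE.const ⟨h1, h2, h3⟩ c
  have hc' := IsLE.const ⟨h1, h2, h3⟩ (-c)
  have hge : E f + c ≤ E (fun y => f y + c) := by
    have := h2 f (fun _ => c)
    rw [hc] at this
    exact this
  have hle : E (fun y => f y + c) ≤ E f + c := by
    have := h2 (fun y => f y + c) (fun _ => -c)
    rw [hc'] at this
    have heq : (fun y => (f y + c) + (-c)) = f := by funext y; ring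
    rw [heq] at this
    linarith
  exact le_antisymm hle hge

lemma T_iter_mono (T : (X → ℝ) → X → ℝ) (hT : ∀ x : X, IsLE (fun h => T h x)) (n : ℕ) :
    ∀ {f g : X → ℝ}, (∀ y, f y ≤ g y) → ∀ x, T^[n] f x ≤ T^[n] g x := by
  induction n with
  | zero => intro f g h x; simpa using h x
  | succ n ih =>
    intro f g h x
    rw [Function.iterate_succ_apply, Function.iterate_succ_apply]
    exact ih (fun y => (hT y).mono h) x

lemma T_iter_shift (T : (X → ℝ) → X → ℝ) (hT : ∀ x : X, IsLE (fun h => T h x)) (n : ℕ) :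
    ∀ (f : X → ℝ) (c : ℝ) (x : X), T^[n] (fun y => f y + c) x = T^[n] f x + c := by
  induction n with
  | zero => intro f c x; simp
  | succ n ih =>
    intro f c x
    rw [Function.iterate_succ_apply, Function.iterate_succ_apply]
    have heq : T (fun y => f y + c) = fun x => T f x + c := by
      funext x; exact (hT x).shift f c
    rw [heq]
    exact ih (T f) c x

section Einf

variable (T : (X → ℝ) → X → ℝ) (hT : ∀ x : X, IsLE (fun h => T h x))
  (Einf : (X → ℝ) → ℝ)
  (hPF : ∀ (h : X → ℝ) (x : X), Tendsto (fun n => (T^[n] h) x) atTop (nhds (Einf h)))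

include hT hPF in
lemma Einf_mono {f g : X → ℝ} (h : ∀ y, f y ≤ g y) : Einf f ≤ Einf g := by
  obtain ⟨x⟩ : Nonempty X := inferInstance
  exact le_of_tendsto_of_tendsto' (hPF f x) (hPF g x) (fun n => T_iter_mono T hT n h x)

include hT hPF in
lemma Einf_shift (f : X → ℝ) (c : ℝ) : Einf (fun y => f y + c) = Einf f + c := by
  obtain ⟨x⟩ : Nonempty X := inferInstance
  have h1 := hPF (fun y => f y + c) x
  have h2 : Tendsto (fun n => T^[n] f x + c) atTop (nhds (Einf f + c)) :=
    (hPF f x).add_const c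
  have heq : (fun n => T^[n] (fun y => f y + c) x) = fun n => T^[n] f x + c := by
    funext n; exact T_iter_shift T hT n f c x
  rw [heq] at h1
  exact tendsto_nhds_unique h1 h2

include hPF in
lemma Einf_T (f : X → ℝ) : Einf (T f) = Einf f := by
  obtain ⟨x⟩ : Nonempty X := inferInstance
  have h1 := hPF (T f) x
  have h2 : Tendsto (fun n => T^[n] (T f) x) atTop (nhds (Einf f)) := by
    have : (fun n => T^[n] (T f) x) = (fun n => T^[n] f x) ∘ (fun n => n + 1) := by
      funext n
      simp [Function.iterate_succ_apply]
    rw [this]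
    exact (hPF f x).comp (tendsto_add_atTop_nat 1)
  exact tendsto_nhds_unique h1 h2

end Einf

end Aux

/-- The extended stationary lower expectation is invariant under the extended lower
transition operator. -/
theorem extended_stationary_invariance {X : Type} [Fintype X] [Nonempty X]
    (T : (X → ℝ) → X → ℝ) (hT : ∀ x : X, IsLE (fun h => T h x))
    (Einf : (X → ℝ) → ℝ)
    (hPF : ∀ (h : X → ℝ) (x : X), Tendsto (fun n => (T^[n] h) x) atTop (nhds (Einf h)))
    (g : X → EReal) :
    sSup ((fun h : X → ℝ => (Einf h : EReal)) '' {h : X → ℝ | ∀ y, (h y : EReal) ≤ g y})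
      = sSup ((fun h : X → ℝ => (Einf h : EReal)) ''
          {h : X → ℝ | ∀ y, (h y : EReal) ≤ Text T g y}) := by
  apply le_antisymm
  · -- h ≤ g implies T h ≤ Text T g and Einf (T h) = Einf h
    apply sSup_le
    rintro a ⟨h, hh, rfl⟩
    have hmem : T h ∈ {h : X → ℝ | ∀ y, (h y : EReal) ≤ Text T g y} := by
      intro y
      exact le_sSup ⟨h, hh, rfl⟩
    have : (Einf (T h) : EReal) ∈ ((fun h : X → ℝ => (Einf h : EReal)) ''
        {h : X → ℝ | ∀ y, (h y : EReal) ≤ Text T g y}) := ⟨T h, hmem, rfl⟩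
    have hle := le_sSup this
    rwa [Einf_T T Einf hPF h] at hle
  · apply sSup_le
    rintro a ⟨h', hh', rfl⟩
    -- we may assume {h | h ≤ g} is nonempty
    by_cases hA : {h : X → ℝ | ∀ y, (h y : EReal) ≤ g y}.Nonempty
    · obtain ⟨h0, hh0⟩ := hA
      refine le_of_forall_lt ?_
      intro c hc
      obtain ⟨q, hcq, hq⟩ := EReal.lt_iff_exists_real_btwn.mp hc
      have hq' : (q : EReal) < (Einf h' : EReal) := hq
      have hqR : q < Einf h' := by exact_mod_cast hq'
      set ε : ℝ := Einf h' - q with hε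
      have hεpos : 0 < ε := by simp [hε]; linarith
      -- for each x, pick k_x ≤ g with h' x - ε < T k_x x
      have hex : ∀ x : X, ∃ k : X → ℝ, (∀ y, (k y : EReal) ≤ g y) ∧ h' x - ε < T k x := by
        intro x
        have hx := hh' x
        have hlt : ((h' x - ε : ℝ) : EReal) < Text T g x := by
          refine lt_of_lt_of_le ?_ hx
          exact_mod_cast (by linarith : h' x - ε < h' x)
        obtain ⟨b, ⟨k, hk, rfl⟩, hbl⟩ := lt_sSup_iff.mp hlt
        have hbl' : ((h' x - ε : ℝ) : EReal) < (T k x : EReal) := hbl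
        exact ⟨k, hk, by exact_mod_cast hbl'⟩
      choose k hkle hkgt using hex
      set K : X → ℝ := fun y => ⨆ x, k x y with hK
      have hbdd : ∀ y, BddAbove (Set.range fun x => k x y) := fun y =>
        Set.Finite.bddAbove (Set.finite_range _)
      have hKle : ∀ y, (K y : EReal) ≤ g y := by
        intro y
        obtain ⟨x0, hx0⟩ := Finite.exists_max (fun x => k x y)
        have : K y = k x0 y := le_antisymm (ciSup_le hx0) (le_ciSup (hbdd y) x0)
        rw [this]
        exact hkle x0 y
      have hTK : ∀ x, h' x - ε ≤ T K x := by
        intro x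
        refine le_trans (le_of_lt (hkgt x)) ?_
        have hmono := (hT x).mono (f := k x) (g := K) (fun y => le_ciSup (hbdd y) x)
        exact hmono
      -- Einf K ≥ Einf h' - ε = q
      have h1 : Einf (fun x => h' x + (-ε)) ≤ Einf (T K) := by
        refine Einf_mono T hT Einf hPF ?_
        intro y
        have := hTK y
        linarith [hTK y]
      rw [Einf_shift T hT Einf hPF h' (-ε), Einf_T T Einf hPF K] at h1
      have hqK : q ≤ Einf K := by simp [hε] at h1 ⊢; linarith
      have hmem : (Einf K : EReal) ∈ ((fun h : X → ℝ => (Einf h : EReal)) ''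
          {h : X → ℝ | ∀ y, (h y : EReal) ≤ g y}) := ⟨K, hKle, rfl⟩
      calc c < (q : EReal) := hcq
        _ ≤ (Einf K : EReal) := by exact_mod_cast hqK
        _ ≤ _ := le_sSup hmem
    · -- the set is empty, so Text T g ≡ ⊥, contradicting h' ≤ Text T g
      exfalso
      have hempty : {h : X → ℝ | ∀ y, (h y : EReal) ≤ g y} = ∅ :=
        Set.not_nonempty_iff_eq_empty.mp hA
      obtain ⟨x⟩ : Nonempty X := inferInstance
      have hx := hh' x
      have : Text T g x = ⊥ := by
        simp [Text, hempty]
      rw [this] at hx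
      exact (EReal.bot_lt_coe (h' x)).not_ge hx

end IP
end
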